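/- arXiv:2605.09599 — 2 statements merged into one kernel-verified Lean document; each statement's English description precedes it below -/
import Mathlib

section
/- Let C₁,...,C_M : ℝ^d → ℝ be twice continuously differentiable convex functions, each C_k being L_k-smooth (i.e., rᵀ∇²C_k(q)r ≤ L_k‖r‖² for all q, r) with ‖∇C_k(q)‖_* ≤ G for all q, where ‖·‖_* is the dual norm. Then for any β > 0 and w ∈ Δ_M with full support, the mixed potential C^mix(q) = (1/β)log(∑_k w(k)e^{βC_k(q)}) is (L_max + βG²)-smooth, where L_max = max_k L_k. -/
open Finset Real

set_option maxHeartbeats 1000000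

/-- Smoothness of the log-sum-exp mixed potential:
if each expert is `L k`-smooth with gradients bounded by `G`, the mixture is
`(L_max + β G²)`-smooth. -/
theorem mix_smoothness (d M : ℕ)
    (hne : (Finset.univ : Finset (Fin M)).Nonempty)
    (C : Fin M → EuclideanSpace ℝ (Fin d) → ℝ)
    (hC : ∀ k, ContDiff ℝ 2 (C k))
    (hconv : ∀ k, ConvexOn ℝ Set.univ (C k))
    (L : Fin M → ℝ) (G : ℝ)
    (hL : ∀ k (q r : EuclideanSpace ℝ (Fin d)),
      (iteratedFDeriv ℝ 2 (C k) q) ![r, r] ≤ L k * ‖r‖ ^ 2)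
    (hG : ∀ k q, ‖gradient (C k) q‖ ≤ G)
    (β : ℝ) (hβ : 0 < β)
    (w : Fin M → ℝ) (hw : ∀ k, 0 < w k) (hw1 : ∑ k, w k = 1) :
    ∀ q r : EuclideanSpace ℝ (Fin d),
      (iteratedFDeriv ℝ 2
          (fun q => (1 / β) * Real.log (∑ k, w k * Real.exp (β * C k q))) q) ![r, r]
        ≤ (Finset.univ.sup' hne L + β * G ^ 2) * ‖r‖ ^ 2 := by
  intro q r
  classical
  have hdk : ∀ k (y : EuclideanSpace ℝ (Fin d)), HasFDerivAt (C k) (fderiv ℝ (C k) y) y :=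
    fun k y => (((hC k).differentiable (by norm_num)) y).hasFDerivAt
  have hSpos : ∀ y : EuclideanSpace ℝ (Fin d), 0 < ∑ k, w k * Real.exp (β * C k y) :=
    fun y => Finset.sum_pos (fun k _ => mul_pos (hw k) (Real.exp_pos _)) hne
  set S' : EuclideanSpace ℝ (Fin d) → (EuclideanSpace ℝ (Fin d) →L[ℝ] ℝ) :=
    fun y => ∑ k, w k • (Real.exp (β * C k y) • (β • fderiv ℝ (C k) y)) with hS'def
  set ψ : EuclideanSpace ℝ (Fin d) → (EuclideanSpace ℝ (Fin d) →L[ℝ] ℝ) :=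
    fun y => (1/β) • ((∑ k, w k * Real.exp (β * C k y))⁻¹ • S' y) with hψdef
  have hS : ∀ y, HasFDerivAt (fun q => ∑ k, w k * Real.exp (β * C k q)) (S' y) y := by
    intro y
    exact HasFDerivAt.fun_sum fun k _ => (((hdk k y).const_mul β).exp).const_mul (w k)
  have hF : ∀ y, HasFDerivAt
      (fun q => (1 / β) * Real.log (∑ k, w k * Real.exp (β * C k q))) (ψ y) y :=
    fun y => ((hS y).log (hSpos y).ne').const_mul (1/β)
  have hfdF : fderiv ℝ (fun q => (1 / β) * Real.log (∑ k, w k * Real.exp (β * C k q))) = ψ :=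
    funext fun y => (hF y).fderiv
  rw [iteratedFDeriv_two_apply, hfdF]
  simp only [Matrix.cons_val_zero, Matrix.cons_val_one, Matrix.head_cons]
  -- differentiability of ψ at q
  have hψd : DifferentiableAt ℝ ψ q := by
    rw [← hfdF]
    have hs2 : ContDiff ℝ 2 (fun q => ∑ k, w k * Real.exp (β * C k q)) :=
      ContDiff.sum fun k _ => contDiff_const.mul ((contDiff_const.mul (hC k)).exp)
    have hFc2 : ContDiffAt ℝ 2
        (fun q => (1 / β) * Real.log (∑ k, w k * Real.exp (β * C k q))) q :=
      contDiffAt_const.mul (hs2.contDiffAt.log (hSpos q).ne')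
    have h1 : ContDiffAt ℝ 1
        (fderiv ℝ (fun q => (1 / β) * Real.log (∑ k, w k * Real.exp (β * C k q)))) q :=
      hFc2.fderiv_right (by norm_num)
    exact h1.differentiableAt one_ne_zero
  have hx0 : HasDerivAt (fun t : ℝ => q + t • r) r 0 := by
    simpa using ((hasDerivAt_id (0:ℝ)).smul_const r).const_add q
  have key : HasDerivAt (fun t : ℝ => ψ (q + t • r) r) (fderiv ℝ ψ q r r) 0 := by
    have h1 : HasDerivAt (fun t : ℝ => ψ (q + t • r)) (fderiv ℝ ψ q r) 0 := by
      have := hψd.hasFDerivAt.comp_hasDerivAt_of_eq 0 hx0 (by simp)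
      simpa [Function.comp_def] using this
    simpa using h1.clm_apply (hasDerivAt_const 0 r)
  -- one-dimensional derivatives of the ingredients
  have hck : ∀ k, HasDerivAt (fun t : ℝ => C k (q + t • r)) (fderiv ℝ (C k) q r) 0 := by
    intro k
    have := (hdk k q).comp_hasDerivAt_of_eq 0 hx0 (by simp)
    simpa [Function.comp_def] using this
  have hbk : ∀ k, HasDerivAt (fun t : ℝ => fderiv ℝ (C k) (q + t • r) r)
      (fderiv ℝ (fderiv ℝ (C k)) q r r) 0 := by
    intro k
    have h1 : ContDiff ℝ 1 (fderiv ℝ (C k)) := (hC k).fderiv_right (by norm_num)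
    have h2 : HasFDerivAt (fderiv ℝ (C k)) (fderiv ℝ (fderiv ℝ (C k)) q) q :=
      ((h1.differentiable one_ne_zero) q).hasFDerivAt
    have h3 : HasDerivAt (fun t : ℝ => fderiv ℝ (C k) (q + t • r))
        (fderiv ℝ (fderiv ℝ (C k)) q r) 0 := by
      have := h2.comp_hasDerivAt_of_eq 0 hx0 (by simp)
      simpa [Function.comp_def] using this
    simpa using h3.clm_apply (hasDerivAt_const 0 r)
  have hexpk : ∀ k, HasDerivAt (fun t : ℝ => Real.exp (β * C k (q + t • r)))
      (Real.exp (β * C k q) * (β * fderiv ℝ (C k) q r)) 0 := by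
    intro k
    simpa using ((hck k).const_mul β).exp
  -- the denominator and numerator
  have hσ : HasDerivAt (fun t : ℝ => ∑ k, w k * Real.exp (β * C k (q + t • r)))
      (∑ k, w k * (Real.exp (β * C k q) * (β * fderiv ℝ (C k) q r))) 0 :=
    HasDerivAt.fun_sum fun k _ => (hexpk k).const_mul (w k)
  have hinv : HasDerivAt (fun t : ℝ => (∑ k, w k * Real.exp (β * C k (q + t • r)))⁻¹)
      (-(∑ k, w k * (Real.exp (β * C k q) * (β * fderiv ℝ (C k) q r)))
        / (∑ k, w k * Real.exp (β * C k q)) ^ 2) 0 := by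
    simpa [Pi.inv_def] using hσ.inv (hSpos (q + (0:ℝ) • r)).ne'
  have hT : HasDerivAt
      (fun t : ℝ => ∑ k, w k * (Real.exp (β * C k (q + t • r)) * (β * fderiv ℝ (C k) (q + t • r) r)))
      (∑ k, w k * ((Real.exp (β * C k q) * (β * fderiv ℝ (C k) q r)) * (β * fderiv ℝ (C k) q r)
        + Real.exp (β * C k q) * (β * fderiv ℝ (fderiv ℝ (C k)) q r r))) 0 := by
    refine HasDerivAt.fun_sum fun k _ => ?_
    have := ((hexpk k).mul ((hbk k).const_mul β)).const_mul (w k)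
    simpa using this
  have hfull : HasDerivAt
      (fun t : ℝ => (1/β) * ((∑ k, w k * Real.exp (β * C k (q + t • r)))⁻¹
        * ∑ k, w k * (Real.exp (β * C k (q + t • r)) * (β * fderiv ℝ (C k) (q + t • r) r))))
      ((1/β) * ((-(∑ k, w k * (Real.exp (β * C k q) * (β * fderiv ℝ (C k) q r)))
          / (∑ k, w k * Real.exp (β * C k q)) ^ 2)
          * (∑ k, w k * (Real.exp (β * C k q) * (β * fderiv ℝ (C k) q r)))
        + (∑ k, w k * Real.exp (β * C k q))⁻¹
          * (∑ k, w k * ((Real.exp (β * C k q) * (β * fderiv ℝ (C k) q r)) * (β * fderiv ℝ (C k) q r)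
            + Real.exp (β * C k q) * (β * fderiv ℝ (fderiv ℝ (C k)) q r r))))) 0 := by
    have := (hinv.mul hT).const_mul (1/β)
    simpa using this
  have hfun : (fun t : ℝ => ψ (q + t • r) r)
      = (fun t : ℝ => (1/β) * ((∑ k, w k * Real.exp (β * C k (q + t • r)))⁻¹
        * ∑ k, w k * (Real.exp (β * C k (q + t • r)) * (β * fderiv ℝ (C k) (q + t • r) r)))) := by
    funext t
    simp [hψdef, hS'def, ContinuousLinearMap.sum_apply, ContinuousLinearMap.smul_apply,
      smul_eq_mul]
  rw [hfun] at key
  have hDeq := key.unique hfull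
  rw [hDeq]
  -- now pure real arithmetic
  set s : ℝ := ∑ k, w k * Real.exp (β * C k q) with hs
  set P : ℝ := ∑ k, w k * (Real.exp (β * C k q) * (β * fderiv ℝ (C k) q r)) with hP
  have hspos : 0 < s := hSpos q
  set Lm : ℝ := Finset.univ.sup' hne L with hLm
  -- gradient bound
  have hanorm : ∀ k, |fderiv ℝ (C k) q r| ≤ G * ‖r‖ := by
    intro k
    have h1 : ‖fderiv ℝ (C k) q r‖ ≤ ‖fderiv ℝ (C k) q‖ * ‖r‖ :=
      (fderiv ℝ (C k) q).le_opNorm r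
    have h2 : ‖fderiv ℝ (C k) q‖ = ‖gradient (C k) q‖ := by
      rw [gradient]
      exact ((InnerProductSpace.toDual ℝ (EuclideanSpace ℝ (Fin d))).symm.norm_map
        (fderiv ℝ (C k) q)).symm
    calc |fderiv ℝ (C k) q r| = ‖fderiv ℝ (C k) q r‖ := (Real.norm_eq_abs _).symm
      _ ≤ ‖fderiv ℝ (C k) q‖ * ‖r‖ := h1
      _ = ‖gradient (C k) q‖ * ‖r‖ := by rw [h2]
      _ ≤ G * ‖r‖ := mul_le_mul_of_nonneg_right (hG k q) (norm_nonneg r)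
  have ha2 : ∀ k, (fderiv ℝ (C k) q r) ^ 2 ≤ G ^ 2 * ‖r‖ ^ 2 := by
    intro k
    have := sq_le_sq' (neg_le_of_abs_le (hanorm k)) (le_of_abs_le (hanorm k))
    calc (fderiv ℝ (C k) q r) ^ 2 ≤ (G * ‖r‖) ^ 2 := this
      _ = G ^ 2 * ‖r‖ ^ 2 := by ring
  have hHk : ∀ k, fderiv ℝ (fderiv ℝ (C k)) q r r ≤ Lm * ‖r‖ ^ 2 := by
    intro k
    have h1 := hL k q r
    rw [iteratedFDeriv_two_apply] at h1
    simp only [Matrix.cons_val_zero, Matrix.cons_val_one, Matrix.head_cons] at h1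
    refine h1.trans ?_
    exact mul_le_mul_of_nonneg_right (Finset.le_sup' L (Finset.mem_univ k)) (by positivity)
  -- bound the second sum
  have hT'le : (∑ k, w k * ((Real.exp (β * C k q) * (β * fderiv ℝ (C k) q r)) * (β * fderiv ℝ (C k) q r)
        + Real.exp (β * C k q) * (β * fderiv ℝ (fderiv ℝ (C k)) q r r)))
      ≤ s * (β * (β * G ^ 2 * ‖r‖ ^ 2 + Lm * ‖r‖ ^ 2)) := by
    rw [hs, Finset.sum_mul]
    refine Finset.sum_le_sum fun k _ => ?_
    have hek : 0 < Real.exp (β * C k q) := Real.exp_pos _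
    have inner : β * (fderiv ℝ (C k) q r) ^ 2 + fderiv ℝ (fderiv ℝ (C k)) q r r
        ≤ β * (G ^ 2 * ‖r‖ ^ 2) + Lm * ‖r‖ ^ 2 := by
      have := mul_le_mul_of_nonneg_left (ha2 k) hβ.le
      have h2 := hHk k
      nlinarith
    calc w k * ((Real.exp (β * C k q) * (β * fderiv ℝ (C k) q r)) * (β * fderiv ℝ (C k) q r)
          + Real.exp (β * C k q) * (β * fderiv ℝ (fderiv ℝ (C k)) q r r))
        = (w k * Real.exp (β * C k q) * β)
            * (β * (fderiv ℝ (C k) q r) ^ 2 + fderiv ℝ (fderiv ℝ (C k)) q r r) := by ring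
      _ ≤ (w k * Real.exp (β * C k q) * β) * (β * (G ^ 2 * ‖r‖ ^ 2) + Lm * ‖r‖ ^ 2) := by
          exact mul_le_mul_of_nonneg_left inner (mul_nonneg (mul_nonneg (hw k).le (Real.exp_pos _).le) hβ.le)
      _ = w k * Real.exp (β * C k q) * (β * (β * G ^ 2 * ‖r‖ ^ 2 + Lm * ‖r‖ ^ 2)) := by ring
  have h1 : (-P / s ^ 2) * P ≤ 0 := by
    have heq : (-P / s ^ 2) * P = -(P ^ 2 / s ^ 2) := by ring
    rw [heq]
    exact neg_nonpos.mpr (by positivity)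
  have h2 : s⁻¹ * (∑ k, w k * ((Real.exp (β * C k q) * (β * fderiv ℝ (C k) q r)) * (β * fderiv ℝ (C k) q r)
        + Real.exp (β * C k q) * (β * fderiv ℝ (fderiv ℝ (C k)) q r r)))
      ≤ s⁻¹ * (s * (β * (β * G ^ 2 * ‖r‖ ^ 2 + Lm * ‖r‖ ^ 2))) :=
    mul_le_mul_of_nonneg_left hT'le (inv_nonneg.mpr hspos.le)
  have h3 : s⁻¹ * (s * (β * (β * G ^ 2 * ‖r‖ ^ 2 + Lm * ‖r‖ ^ 2)))
      = β * (β * G ^ 2 * ‖r‖ ^ 2 + Lm * ‖r‖ ^ 2) := by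
    field_simp
  calc (1/β) * ((-P / s ^ 2) * P
        + s⁻¹ * (∑ k, w k * ((Real.exp (β * C k q) * (β * fderiv ℝ (C k) q r)) * (β * fderiv ℝ (C k) q r)
          + Real.exp (β * C k q) * (β * fderiv ℝ (fderiv ℝ (C k)) q r r))))
      ≤ (1/β) * (β * (β * G ^ 2 * ‖r‖ ^ 2 + Lm * ‖r‖ ^ 2)) := by
        refine mul_le_mul_of_nonneg_left ?_ (one_div_nonneg.mpr hβ.le)
        calc (-P / s ^ 2) * P + _ ≤ 0 + s⁻¹ * (s * (β * (β * G ^ 2 * ‖r‖ ^ 2 + Lm * ‖r‖ ^ 2))) :=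
              add_le_add h1 h2
          _ = β * (β * G ^ 2 * ‖r‖ ^ 2 + Lm * ‖r‖ ^ 2) := by rw [zero_add, h3]
    _ = (Lm + β * G ^ 2) * ‖r‖ ^ 2 := by
        field_simp
        ring
end

section
/- Let C₁,...,C_M : ℝ^d → ℝ be convex differentiable functions, β > 0, w ∈ Δ_M with full support, and let π(q) denote the posterior softmax weights. For a trade from q_{t-1} to q_t = q_{t-1} + r, the Bregman divergence of the mixture C^mix satisfies D_{C^mix}(q_t, q_{t-1}) ≤ ∑_k π_k(q_t) S_k + ∑_k (π_k(q_t) - π_k(q_{t-1})) ∇C_k(q_{t-1})·r, where S_k = D_{C_k}(q_t, q_{t-1}) is the expert slippage. -/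
open Finset Real

/-- Slippage bound: the Bregman divergence of the log-sum-exp mixture is
bounded by the posterior-weighted expert slippages plus a posterior-shift
correction. -/
theorem mix_slippage_bound (d M : ℕ)
    (C : Fin M → EuclideanSpace ℝ (Fin d) → ℝ)
    (g : Fin M → EuclideanSpace ℝ (Fin d) → EuclideanSpace ℝ (Fin d))
    (hconv : ∀ k, ConvexOn ℝ Set.univ (C k))
    (hg : ∀ k q, HasGradientAt (C k) (g k q) q)
    (β : ℝ) (hβ : 0 < β)
    (w : Fin M → ℝ) (hw : ∀ k, 0 < w k) (hw1 : ∑ k, w k = 1)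
    (post : EuclideanSpace ℝ (Fin d) → Fin M → ℝ)
    (hpost : ∀ q k, post q k = w k * Real.exp (β * C k q) / ∑ j, w j * Real.exp (β * C j q)) :
    ∀ (q r : EuclideanSpace ℝ (Fin d)),
      ((1 / β) * Real.log (∑ k, w k * Real.exp (β * C k (q + r)))
        - (1 / β) * Real.log (∑ k, w k * Real.exp (β * C k q))
        - ∑ k, post q k * (inner ℝ (g k q) r : ℝ))
      ≤ (∑ k, post (q + r) k * (C k (q + r) - C k q - (inner ℝ (g k q) r : ℝ)))
        + ∑ k, (post (q + r) k - post q k) * (inner ℝ (g k q) r : ℝ) := by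
  intro q r
  set x : Fin M → ℝ := fun k => C k (q + r) with hx
  set y : Fin M → ℝ := fun k => C k q with hy
  set gr : Fin M → ℝ := fun k => (inner ℝ (g k q) r : ℝ) with hgr
  have hZ' : 0 < ∑ k, w k * Real.exp (β * x k) :=
    Finset.sum_pos (fun k _ => mul_pos (hw k) (Real.exp_pos _)) ⟨⟨0, by
      rcases Nat.eq_zero_or_pos M with h | h
      · exact absurd (hw1 ▸ (by subst h; simp : (∑ k : Fin M, w k) = 0))
          (by norm_num)
      · exact h⟩, Finset.mem_univ _⟩
  have hZ : 0 < ∑ k, w k * Real.exp (β * y k) :=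
    Finset.sum_pos (fun k _ => mul_pos (hw k) (Real.exp_pos _)) ⟨⟨0, by
      rcases Nat.eq_zero_or_pos M with h | h
      · exact absurd (hw1 ▸ (by subst h; simp : (∑ k : Fin M, w k) = 0))
          (by norm_num)
      · exact h⟩, Finset.mem_univ _⟩
  set Z' : ℝ := ∑ k, w k * Real.exp (β * x k)
  set Z : ℝ := ∑ k, w k * Real.exp (β * y k)
  have hπ : ∀ k, post (q + r) k = w k * Real.exp (β * x k) / Z' := fun k => hpost _ k
  have hπnn : ∀ k ∈ Finset.univ, (0:ℝ) ≤ post (q + r) k := fun k _ => by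
    rw [hπ k]; exact div_nonneg (mul_nonneg (hw k).le (Real.exp_pos _).le) hZ'.le
  have hπ1 : ∑ k, post (q + r) k = 1 := by
    simp only [hπ]
    rw [← Finset.sum_div, div_self hZ'.ne']
  -- Jensen: exp(∑ π (-t)) ≤ ∑ π exp(-t) with t k = β (x k - y k)
  set t : Fin M → ℝ := fun k => β * (x k - y k) with ht
  have jensen : Real.exp (∑ k, post (q + r) k • (-(t k))) ≤
      ∑ k, post (q + r) k • Real.exp (-(t k)) :=
    convexOn_exp.map_sum_le hπnn hπ1 (fun _ _ => Set.mem_univ _)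
  -- ∑ π exp(-t) = Z / Z'
  have hsum : ∑ k, post (q + r) k • Real.exp (-(t k)) = Z / Z' := by
    have he : ∀ k : Fin M, post (q + r) k • Real.exp (-(t k))
        = (w k * Real.exp (β * y k)) / Z' := by
      intro k
      rw [smul_eq_mul, hπ k, div_mul_eq_mul_div, mul_assoc, ← Real.exp_add]
      congr 2
      simp only [ht]; ring
    rw [Finset.sum_congr rfl (fun k _ => he k), ← Finset.sum_div]
  have key : (1/β) * Real.log Z' - (1/β) * Real.log Z ≤
      ∑ k, post (q + r) k * (x k - y k) := by
    have h1 : Real.exp (-∑ k, post (q + r) k * t k) ≤ Z / Z' := by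
      rw [← hsum]
      convert jensen using 2
      rw [← Finset.sum_neg_distrib]
      simp [smul_eq_mul, mul_comm]
    have h2 : -∑ k, post (q + r) k * t k ≤ Real.log (Z / Z') := by
      have := Real.log_le_log (Real.exp_pos _) h1
      rwa [Real.log_exp] at this
    rw [Real.log_div hZ.ne' hZ'.ne'] at h2
    have hts : ∑ k, post (q + r) k * t k = β * ∑ k, post (q + r) k * (x k - y k) := by
      rw [Finset.mul_sum]
      apply Finset.sum_congr rfl
      intro k _
      simp only [ht]; ring
    rw [hts] at h2
    rw [div_mul_eq_mul_div, div_mul_eq_mul_div, ← sub_div, div_le_iff₀ hβ, one_mul, one_mul]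
    nlinarith [h2]
  have hrhs : (∑ k, post (q + r) k * (x k - y k - gr k))
      + ∑ k, (post (q + r) k - post q k) * gr k
      = (∑ k, post (q + r) k * (x k - y k)) - ∑ k, post q k * gr k := by
    rw [← Finset.sum_add_distrib, ← Finset.sum_sub_distrib]
    apply Finset.sum_congr rfl
    intro k _
    ring
  have : (1/β) * Real.log Z' - (1/β) * Real.log Z - ∑ k, post q k * gr k
      ≤ (∑ k, post (q + r) k * (x k - y k - gr k))
      + ∑ k, (post (q + r) k - post q k) * gr k := by
    rw [hrhs]; linarith
  exact this
end
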